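/- Let (C, D, E, i_*, j^*, i^*, i^!, j_!, j_*) be a gluing datum of triangulated categories, and let t_D, t_E, t_C be t-structures on D, E, C respectively. Then t_C is glued from t_D and t_E — meaning that C^{t_C≤0} = { M ∈ C : j^*M ∈ E^{t_E≤0} and i^*M ∈ D^{t_D≤0} } and C^{t_C≥0} = { M ∈ C : j^*M ∈ E^{t_E≥0} and i^!M ∈ D^{t_D≥0} } — if and only if both i_* and j^* are t-exact (i.e., i_*(D^{t_D≤0}) ⊆ C^{t_C≤0}, i_*(D^{t_D≥0}) ⊆ C^{t_C≥0}, j^*(C^{t_C≤0}) ⊆ E^{t_E≤0}, and j^*(C^{t_C≥0}) ⊆ E^{t_E≥0}). -/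

import Mathlib

open CategoryTheory CategoryTheory.Limits CategoryTheory.Pretriangulated

universe v₁ v₂ v₃ u₁ u₂ u₃

/-- A *t-structure* on a pretriangulated category `C` given as a pair `(le, ge)` of strict
classes of objects. -/
structure TStructurePair (C : Type u₁) [Category.{v₁} C] [HasZeroObject C] [Preadditive C]
    [HasShift C ℤ] [∀ n : ℤ, (shiftFunctor C n).Additive] [Pretriangulated C] where
  le : Set C
  ge : Set C
  le_iso : ∀ ⦃X Y : C⦄, (X ≅ Y) → X ∈ le → Y ∈ le
  ge_iso : ∀ ⦃X Y : C⦄, (X ≅ Y) → X ∈ ge → Y ∈ ge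
  le_shift : ∀ X ∈ le, X⟦(1 : ℤ)⟧ ∈ le
  ge_shift : ∀ X ∈ ge, X⟦(-1 : ℤ)⟧ ∈ ge
  hom_zero : ∀ ⦃X Y : C⦄, X ∈ le → (Y⟦(1 : ℤ)⟧ ∈ ge) → ∀ f : X ⟶ Y, f = 0
  exists_triangle : ∀ M : C, ∃ (A B : C) (f : A ⟶ M) (g : M ⟶ B) (h : B ⟶ A⟦(1 : ℤ)⟧),
    A ∈ le ∧ B⟦(1 : ℤ)⟧ ∈ ge ∧ Triangle.mk f g h ∈ distTriang C

/-!
Orthogonality characterises a t-structure: `le` is the left orthogonal of `ge[-1]` and `ge[-1]` the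
right orthogonal of `le`. Hence both halves are closed under extensions, and for an adjunction
`F ⊣ G` with `G` commuting with shifts, `G(ge) ⊆ ge` forces `F(le) ⊆ le`, and dually. If `i_*` and
`j^*` are t-exact, this applied to the four adjunctions of the gluing datum shows that `i^*`, `j_!`
preserve `le` and `i^!`, `j_*` preserve `ge`; the gluing triangles then exhibit every object
satisfying the glued conditions as an extension of two objects of the same half of `t_C`.
Conversely `j^* i_* = 0` and `i^* i_* ≅ id ≅ i^! i_*` make `i_*` and `j^*` t-exact for the glued
t-structure.
-/

lemma CategoryTheory.Adjunction.homEquiv_eq_zero_iff {C₁ C₂ : Type*} [Category C₁]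
    [Category C₂] [HasZeroMorphisms C₁] [HasZeroMorphisms C₂] {F : C₁ ⥤ C₂} {G : C₂ ⥤ C₁}
    (adj : F ⊣ G) {X : C₁} {Y : C₂} (f : F.obj X ⟶ Y) : adj.homEquiv X Y f = 0 ↔ f = 0 := by
  have := adj.isRightAdjoint
  rw [← (adj.homEquiv X Y).apply_eq_iff_eq, adj.homEquiv_unit, adj.homEquiv_unit,
    G.map_zero, comp_zero]

lemma CategoryTheory.Adjunction.homEquiv_symm_eq_zero_iff {C₁ C₂ : Type*} [Category C₁]
    [Category C₂] [HasZeroMorphisms C₁] [HasZeroMorphisms C₂] {F : C₁ ⥤ C₂} {G : C₂ ⥤ C₁}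
    (adj : F ⊣ G) {X : C₁} {Y : C₂} (g : X ⟶ G.obj Y) : (adj.homEquiv X Y).symm g = 0 ↔ g = 0 := by
  rw [← adj.homEquiv_eq_zero_iff, Equiv.apply_symm_apply]

namespace TStructurePair

variable {C : Type u₁} [Category.{v₁} C] [HasZeroObject C] [Preadditive C] [HasShift C ℤ]
  [∀ n : ℤ, (shiftFunctor C n).Additive] [Pretriangulated C] (t : TStructurePair C)

lemma shift_hom_eq_zero {X Y : C} (hX : X ∈ t.le) (hY : Y ∈ t.ge) (f : X⟦(1 : ℤ)⟧ ⟶ Y) :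
    f = 0 := by
  refine ((shiftEquiv C (1 : ℤ)).toAdjunction.homEquiv_eq_zero_iff f).1 ?_
  exact t.hom_zero hX (t.ge_iso ((shiftFunctorCompIsoId C (-1 : ℤ) 1 (by simp)).symm.app Y) hY) _

lemma mem_le_of_hom_eq_zero {X : C} (h : ∀ Y : C, Y⟦(1 : ℤ)⟧ ∈ t.ge → ∀ f : X ⟶ Y, f = 0) :
    X ∈ t.le := by
  obtain ⟨A, B, f, g, w, hA, hB, hT⟩ := t.exists_triangle X
  obtain ⟨u, hu⟩ := Triangle.yoneda_exact₃ _ hT (𝟙 B)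
    (by simp only [Triangle.mk_mor₂, h B hB g]; exact zero_comp)
  have hB0 : IsZero B := by
    rw [IsZero.iff_id_eq_zero, hu, t.hom_zero (t.le_shift A hA) hB u]
    exact comp_zero
  have : IsIso f := (Triangle.isZero₃_iff_isIso₁ _ hT).1 hB0
  exact t.le_iso (asIso f) hA

lemma mem_ge_of_hom_eq_zero {M : C} (h : ∀ X ∈ t.le, ∀ f : X⟦(1 : ℤ)⟧ ⟶ M, f = 0) :
    M ∈ t.ge := by
  let adj := (shiftEquiv C (1 : ℤ)).toAdjunction
  obtain ⟨A, B, f, g, w, hA, hB, hT⟩ := t.exists_triangle (M⟦(-1 : ℤ)⟧)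
  have hf : f = 0 := (adj.homEquiv_symm_eq_zero_iff f).1 (h A hA _)
  obtain ⟨v, hv⟩ := Triangle.coyoneda_exact₂ _ (inv_rot_of_distTriang _ hT) (𝟙 A)
    (by simp only [Triangle.invRotate_mor₂, Triangle.mk_mor₁, hf]; exact comp_zero)
  have hB' : (B⟦(-1 : ℤ)⟧)⟦(1 : ℤ)⟧ ∈ t.ge :=
    t.ge_iso ((shiftFunctorCompIsoId C (1 : ℤ) (-1 : ℤ) (by simp)).app B ≪≫
      (shiftFunctorCompIsoId C (-1 : ℤ) (1 : ℤ) (by simp)).symm.app B) (t.ge_shift _ hB)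
  have hA0 : IsZero A := by
    rw [IsZero.iff_id_eq_zero, hv, t.hom_zero hA hB' v]
    exact zero_comp
  have : IsIso g := (Triangle.isZero₁_iff_isIso₂ _ hT).1 hA0
  exact t.ge_iso (((shiftFunctor C (1 : ℤ)).mapIso (asIso g)).symm ≪≫
    (shiftFunctorCompIsoId C (-1 : ℤ) (1 : ℤ) (by simp)).app M) hB

lemma mem_le_of_isZero {Z : C} (hZ : IsZero Z) : Z ∈ t.le :=
  t.mem_le_of_hom_eq_zero fun _ _ f => hZ.eq_of_src f 0

lemma mem_ge_of_isZero {Z : C} (hZ : IsZero Z) : Z ∈ t.ge :=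
  t.mem_ge_of_hom_eq_zero fun _ _ f => hZ.eq_of_tgt f 0

lemma mem_le_of_distTriang {T : Triangle C} (hT : T ∈ distTriang C) (h₁ : T.obj₁ ∈ t.le)
    (h₃ : T.obj₃ ∈ t.le) : T.obj₂ ∈ t.le :=
  t.mem_le_of_hom_eq_zero fun Y hY f => by
    obtain ⟨g, rfl⟩ := Triangle.yoneda_exact₂ T hT f (t.hom_zero h₁ hY _)
    rw [t.hom_zero h₃ hY g, comp_zero]

lemma mem_ge_of_distTriang {T : Triangle C} (hT : T ∈ distTriang C) (h₁ : T.obj₁ ∈ t.ge)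
    (h₃ : T.obj₃ ∈ t.ge) : T.obj₂ ∈ t.ge :=
  t.mem_ge_of_hom_eq_zero fun X hX f => by
    obtain ⟨g, rfl⟩ := Triangle.coyoneda_exact₂ T hT f (t.shift_hom_eq_zero hX h₃ _)
    rw [t.shift_hom_eq_zero hX h₁ g, zero_comp]

variable {D : Type u₂} [Category.{v₂} D] [HasZeroObject D] [Preadditive D] [HasShift D ℤ]
  [∀ n : ℤ, (shiftFunctor D n).Additive] [Pretriangulated D] (t' : TStructurePair D)
  {F : C ⥤ D} {G : D ⥤ C}

lemma obj_mem_le_of_adjunction (adj : F ⊣ G) [G.CommShift ℤ]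
    (hG : ∀ Y ∈ t'.ge, G.obj Y ∈ t.ge) ⦃X : C⦄ (hX : X ∈ t.le) : F.obj X ∈ t'.le :=
  t'.mem_le_of_hom_eq_zero fun Y hY f => by
    rw [← adj.homEquiv_eq_zero_iff]
    exact t.hom_zero hX (t.ge_iso ((G.commShiftIso (1 : ℤ)).app Y) (hG _ hY)) _

lemma obj_mem_ge_of_adjunction (adj : F ⊣ G) [F.CommShift ℤ]
    (hF : ∀ X ∈ t.le, F.obj X ∈ t'.le) ⦃Y : D⦄ (hY : Y ∈ t'.ge) : G.obj Y ∈ t.ge :=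
  t.mem_ge_of_hom_eq_zero fun X hX f => by
    rw [← adj.homEquiv_symm_eq_zero_iff, ← cancel_epi ((F.commShiftIso (1 : ℤ)).inv.app X),
      comp_zero]
    exact t'.shift_hom_eq_zero (hF X hX) hY _

end TStructurePair

/-- Given a gluing datum `(C, D, E, iStar = i_*, jPull = j^*, iPull = i^*, iShriek = i^!,
jShriek = j_!, jStar = j_*)` of triangulated categories and t-structures `t_D`, `t_E`, `t_C`
on `D`, `E`, `C`, the t-structure `t_C` is glued from `t_D` and `t_E` if and only if `i_*`
and `j^*` are t-exact. -/
theorem glued_tStructure_iff_tExact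
    {C : Type u₁} [Category.{v₁} C] [HasZeroObject C] [Preadditive C] [HasShift C ℤ]
    [∀ n : ℤ, (shiftFunctor C n).Additive] [Pretriangulated C] [IsTriangulated C]
    {D : Type u₂} [Category.{v₂} D] [HasZeroObject D] [Preadditive D] [HasShift D ℤ]
    [∀ n : ℤ, (shiftFunctor D n).Additive] [Pretriangulated D] [IsTriangulated D]
    {E : Type u₃} [Category.{v₃} E] [HasZeroObject E] [Preadditive E] [HasShift E ℤ]
    [∀ n : ℤ, (shiftFunctor E n).Additive] [Pretriangulated E] [IsTriangulated E]
    -- the six exact functors of the gluing datum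
    (iStar : D ⥤ C) [iStar.CommShift ℤ] [iStar.IsTriangulated]
    (jPull : C ⥤ E) [jPull.CommShift ℤ] [jPull.IsTriangulated]
    (iPull : C ⥤ D) [iPull.CommShift ℤ] [iPull.IsTriangulated]
    (iShriek : C ⥤ D) [iShriek.CommShift ℤ] [iShriek.IsTriangulated]
    (jShriek : E ⥤ C) [jShriek.CommShift ℤ] [jShriek.IsTriangulated]
    (jStar : E ⥤ C) [jStar.CommShift ℤ] [jStar.IsTriangulated]
    -- the adjunctions: i^* ⊣ i_* ⊣ i^! and j_! ⊣ j^* ⊣ j_*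
    (adj_i₁ : iPull ⊣ iStar) (adj_i₂ : iStar ⊣ iShriek)
    (adj_j₁ : jShriek ⊣ jPull) (adj_j₂ : jPull ⊣ jStar)
    -- i_* is fully faithful
    [iStar.Full] [iStar.Faithful]
    -- j^* ∘ i_* = 0
    (hji : ∀ X : D, IsZero (jPull.obj (iStar.obj X)))
    -- the gluing distinguished triangles j_!j^*M → M → i_*i^*M and i_*i^!M → M → j_*j^*M
    (htri₁ : ∀ M : C, ∃ w : iStar.obj (iPull.obj M) ⟶ (jShriek.obj (jPull.obj M))⟦(1 : ℤ)⟧,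
      Triangle.mk (adj_j₁.counit.app M) (adj_i₁.unit.app M) w ∈ distTriang C)
    (htri₂ : ∀ M : C, ∃ w : jStar.obj (jPull.obj M) ⟶ (iStar.obj (iShriek.obj M))⟦(1 : ℤ)⟧,
      Triangle.mk (adj_i₂.counit.app M) (adj_j₂.unit.app M) w ∈ distTriang C)
    -- i^* ∘ j_! = 0 and i^! ∘ j_* = 0
    (hij₁ : ∀ Y : E, IsZero (iPull.obj (jShriek.obj Y)))
    (hij₂ : ∀ Y : E, IsZero (iShriek.obj (jStar.obj Y)))
    -- the adjunction transformations i^*i_* → id_D → i^!i_* and j^*j_* → id_E → j^*j_!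
    -- are isomorphisms
    [IsIso adj_i₁.counit] [IsIso adj_i₂.unit] [IsIso adj_j₂.counit] [IsIso adj_j₁.unit]
    -- t-structures on D, E and C
    (tD : TStructurePair D) (tE : TStructurePair E) (tC : TStructurePair C) :
    (tC.le = {M : C | jPull.obj M ∈ tE.le ∧ iPull.obj M ∈ tD.le} ∧
     tC.ge = {M : C | jPull.obj M ∈ tE.ge ∧ iShriek.obj M ∈ tD.ge}) ↔
    ((∀ X ∈ tD.le, iStar.obj X ∈ tC.le) ∧ (∀ X ∈ tD.ge, iStar.obj X ∈ tC.ge) ∧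
     (∀ M ∈ tC.le, jPull.obj M ∈ tE.le) ∧ (∀ M ∈ tC.ge, jPull.obj M ∈ tE.ge)) := by
  constructor
  · rintro ⟨hle, hge⟩
    refine ⟨fun X hX => ?_, fun X hX => ?_, fun M hM => (hle ▸ hM).1, fun M hM => (hge ▸ hM).1⟩
    · rw [hle]
      exact ⟨tE.mem_le_of_isZero (hji X), tD.le_iso (asIso (adj_i₁.counit.app X)).symm hX⟩
    · rw [hge]
      exact ⟨tE.mem_ge_of_isZero (hji X), tD.ge_iso (asIso (adj_i₂.unit.app X)) hX⟩
  · rintro ⟨hi_le, hi_ge, hj_le, hj_ge⟩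
    have hiPull_le := tC.obj_mem_le_of_adjunction tD adj_i₁ hi_ge
    have hjShriek_le := tE.obj_mem_le_of_adjunction tC adj_j₁ hj_ge
    have hiShriek_ge := tD.obj_mem_ge_of_adjunction tC adj_i₂ hi_le
    have hjStar_ge := tC.obj_mem_ge_of_adjunction tE adj_j₂ hj_le
    refine ⟨Set.ext fun M => ⟨fun hM => ⟨hj_le M hM, hiPull_le hM⟩, fun ⟨hjM, hiM⟩ => ?_⟩,
      Set.ext fun M => ⟨fun hM => ⟨hj_ge M hM, hiShriek_ge hM⟩, fun ⟨hjM, hiM⟩ => ?_⟩⟩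
    · obtain ⟨w, hT⟩ := htri₁ M
      exact tC.mem_le_of_distTriang hT (hjShriek_le hjM) (hi_le _ hiM)
    · obtain ⟨w, hT⟩ := htri₂ M
      exact tC.mem_ge_of_distTriang hT (hi_ge _ hiM) (hjStar_ge hjM)
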